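/- arXiv:1501.07539 — 8 statements merged into one kernel-verified Lean document; each statement's English description precedes it below -/
import Mathlib

section
/- Every finite simple graph with at least two vertices, at most one vertex of even degree, and no automorphism of order 2 contains a cycle. -/
open SimpleGraph Walk

-- getVert is injective on paths
lemma getVert_inj_aux {V : Type*} {H : SimpleGraph V} {a b : V} (p : H.Walk a b)
    (hp : p.IsPath) : ∀ i j, i ≤ p.length → j ≤ p.length →
    p.getVert i = p.getVert j → i = j := by
  induction p with
  | nil => intro i j hi hj _; simp only [Walk.length_nil, Nat.le_zero] at hi hj; omega
  | cons h q ih =>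
    rename_i u v w
    rw [Walk.cons_isPath_iff] at hp
    intro i j hi hj hij
    match i, j with
    | 0, 0 => rfl
    | 0, (t+1) =>
      exfalso
      rw [Walk.getVert_zero, Walk.getVert_cons_succ] at hij
      exact hp.2 (Walk.mem_support_iff_exists_getVert.mpr ⟨t, hij.symm, by simpa using hj⟩)
    | (s+1), 0 =>
      exfalso
      rw [Walk.getVert_zero, Walk.getVert_cons_succ] at hij
      exact hp.2 (Walk.mem_support_iff_exists_getVert.mpr ⟨s, hij, by simpa using hi⟩)
    | (s+1), (t+1) =>
      rw [Walk.getVert_cons_succ, Walk.getVert_cons_succ] at hij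
      have := ih hp.1 s t (by simpa using hi) (by simpa using hj) hij
      omega

-- Lemma A: in an acyclic graph, a neighbor of the start of a path lying on the path
-- must be the second vertex.
lemma lemA {V : Type*} [DecidableEq V] {H : SimpleGraph V} (hac : H.IsAcyclic) {a b w : V}
    (q : H.Walk a b) (hq : q.IsPath) (h : H.Adj a w) (hw : w ∈ q.support) :
    w = q.getVert 1 := by
  have hne : a ≠ w := h.ne
  set t := q.takeUntil w hw with ht
  have htp : t.IsPath := hq.takeUntil hw
  have hsp : (Walk.cons h (Walk.nil : H.Walk w w)).IsPath := by
    rw [Walk.cons_isPath_iff]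
    exact ⟨Walk.IsPath.nil, by simp [hne]⟩
  have := isAcyclic_iff_path_unique.mp hac ⟨t, htp⟩ ⟨Walk.cons h Walk.nil, hsp⟩
  have hteq : t = Walk.cons h Walk.nil := congrArg Subtype.val this
  have hspec := q.take_spec hw
  rw [← ht, hteq] at hspec
  rw [← hspec]
  simp [Walk.cons_append, Walk.nil_append, Walk.getVert_cons_succ, Walk.getVert_zero]

-- Lemma B: neighbors of the start of a maximum-length path equal the second vertex.
lemma lemB {V : Type*} [DecidableEq V] {H : SimpleGraph V} (hac : H.IsAcyclic) {a b w : V}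
    (q : H.Walk a b) (hq : q.IsPath)
    (hmax : ∀ (x y : V) (r : H.Walk x y), r.IsPath → r.length ≤ q.length)
    (h : H.Adj a w) : w = q.getVert 1 := by
  by_cases hw : w ∈ q.support
  · exact lemA hac q hq h hw
  · exfalso
    have : (Walk.cons h.symm q).IsPath := hq.cons hw
    have := hmax _ _ _ this
    simp [Walk.length_cons] at this

-- Swap automorphism from twins
lemma lemSwap {V : Type*} [DecidableEq V] {H : SimpleGraph V} {u v : V} (hne : u ≠ v)
    (hC : ∀ x, x ≠ u → x ≠ v → (H.Adj u x ↔ H.Adj v x))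
    (hinv : ∀ ρ : H ≃g H, (∀ x, ρ (ρ x) = x) → ∀ x, ρ x = x) : False := by
  have key : ∀ a b, H.Adj a b → H.Adj (Equiv.swap u v a) (Equiv.swap u v b) := by
    intro a b hab
    simp only [Equiv.swap_apply_def]
    split_ifs <;> subst_vars <;>
      first
      | exact hab
      | exact hab.symm
      | exact (H.irrefl hab).elim
      | exact (hC _ ‹_› ‹_›).mp hab
      | exact (hC _ ‹_› ‹_›).mpr hab
      | exact ((hC _ ‹_› ‹_›).mp hab.symm).symm
      | exact ((hC _ ‹_› ‹_›).mpr hab.symm).symm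
  let ρ : H ≃g H := ⟨Equiv.swap u v, by
    intro a b
    constructor
    · intro h
      have := key _ _ h
      simpa [Equiv.swap_apply_self] using this
    · exact key a b⟩
  have h1 : ρ u = u := hinv ρ (fun x => Equiv.swap_apply_self u v x) u
  have h2 : ρ u = v := Equiv.swap_apply_left u v
  exact hne (h1.symm.trans h2)

lemma exists_max_path {V : Type*} [Fintype V] (H : SimpleGraph V) (hne : Nonempty V) :
    ∃ (a b : V) (p : H.Walk a b), p.IsPath ∧
      ∀ (x y : V) (r : H.Walk x y), r.IsPath → r.length ≤ p.length := by
  classical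
  obtain ⟨a0⟩ := hne
  let P : ℕ → Prop := fun n => ∃ (x y : V) (r : H.Walk x y), r.IsPath ∧ r.length = n
  have hP0 : P 0 := ⟨a0, a0, Walk.nil, Walk.IsPath.nil, rfl⟩
  obtain ⟨a, b, p, hp, hlen⟩ :=
    Nat.findGreatest_spec (P := P) (Nat.zero_le (Fintype.card V)) hP0
  exact ⟨a, b, p, hp, fun x y r hr =>
    hlen ▸ Nat.le_findGreatest (le_of_lt hr.length_lt) ⟨x, y, r, hr, rfl⟩⟩

-- Lemma C: for a maximum path of length ≥ 2, either there are "twins" or the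
-- second vertex has even degree.
lemma lemC {V : Type*} [Fintype V] [DecidableEq V] (H : SimpleGraph V) [DecidableRel H.Adj]
    (hac : H.IsAcyclic) {a b : V} (p : H.Walk a b) (hp : p.IsPath)
    (hmaxp : ∀ (x y : V) (r : H.Walk x y), r.IsPath → r.length ≤ p.length) :
    2 ≤ p.length →
    (∃ u v : V, u ≠ v ∧ ∀ x, x ≠ u → x ≠ v → (H.Adj u x ↔ H.Adj v x)) ∨
      Even (H.degree (p.getVert 1)) := by
  cases p with
  | nil => intro hlen; simp at hlen
  | cons h1 q =>
    cases q with
    | nil => intro hlen; simp at hlen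
    | cons h2 r =>
      rename_i v1 v2
      intro _
      have hp1 : (Walk.cons h2 r).IsPath := hp.of_cons
      have hasup : a ∉ (Walk.cons h2 r).support := ((Walk.cons_isPath_iff _ _).mp hp).2
      have hNa : ∀ x, H.Adj a x → x = v1 := by
        intro x hx
        simpa [Walk.getVert_cons_succ, Walk.getVert_zero] using lemB hac _ hp hmaxp hx
      by_cases hw : ∃ w, H.Adj v1 w ∧ w ≠ a ∧ w ≠ v2
      · obtain ⟨w, hw1, hwa, hwv2⟩ := hw
        have hwsup : w ∉ (Walk.cons h2 r).support := by
          intro hmem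
          have := lemA hac (Walk.cons h2 r) hp1 hw1 hmem
          simp [Walk.getVert_cons_succ, Walk.getVert_zero] at this
          exact hwv2 this
        have hp' : (Walk.cons hw1.symm (Walk.cons h2 r)).IsPath := hp1.cons hwsup
        have hmax' : ∀ (x y : V) (s : H.Walk x y), s.IsPath →
            s.length ≤ (Walk.cons hw1.symm (Walk.cons h2 r)).length := by
          intro x y s hs
          have := hmaxp x y s hs
          simpa using this
        have hNw : ∀ x, H.Adj w x → x = v1 := by
          intro x hx
          simpa [Walk.getVert_cons_succ, Walk.getVert_zero] using lemB hac _ hp' hmax' hx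
        refine Or.inl ⟨a, w, fun hh => hwa hh.symm, ?_⟩
        intro x hxa hxw
        constructor
        · intro hx; rw [hNa x hx]; exact hw1.symm
        · intro hx; rw [hNw x hx]; exact h1
      · push_neg at hw
        have hav2 : a ≠ v2 := by
          intro hh
          exact hasup (by simp [Walk.support_cons, hh])
        have hnb : H.neighborFinset v1 = {a, v2} := by
          ext x
          simp only [SimpleGraph.mem_neighborFinset, Finset.mem_insert, Finset.mem_singleton]
          constructor
          · intro hx
            by_contra hcon
            push_neg at hcon
            exact hcon.2 (hw x hx hcon.1)
          · rintro (rfl | rfl)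
            · exact h1.symm
            · exact h2
        have hdeg : H.degree v1 = 2 := by
          rw [SimpleGraph.degree, hnb, Finset.card_insert_of_notMem (by simp [hav2]),
            Finset.card_singleton]
        right
        rw [Walk.getVert_cons_succ, Walk.getVert_zero, hdeg]
        exact ⟨1, rfl⟩

/-- A finite simple graph with at least two vertices, at most one even-degree
vertex, and no automorphism of order 2 contains a cycle. -/
theorem stmt_4 {V : Type*} [Fintype V] [DecidableEq V] (H : SimpleGraph V)
    [DecidableRel H.Adj]
    (hcard : 2 ≤ Fintype.card V)
    (heven : ∀ u v : V, Even (H.degree u) → Even (H.degree v) → u = v)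
    (hinv : ∀ ρ : H ≃g H, (∀ v, ρ (ρ v) = v) → ∀ v, ρ v = v) :
    ¬ H.IsAcyclic := by
  intro hac
  have hne : Nonempty V := Fintype.card_pos_iff.mp (by omega)
  obtain ⟨a, b, p, hp, hmaxp⟩ := exists_max_path H hne
  cases p with
  | nil =>
    -- no edges at all
    have hnoadj : ∀ x y : V, ¬ H.Adj x y := by
      intro x y hxy
      have hpath : (Walk.cons hxy Walk.nil).IsPath := by
        rw [Walk.cons_isPath_iff]
        exact ⟨Walk.IsPath.nil, by simp [hxy.ne]⟩
      have := hmaxp _ _ _ hpath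
      simp at this
    have hdeg : ∀ x : V, H.degree x = 0 := by
      intro x
      rw [SimpleGraph.degree, Finset.card_eq_zero, Finset.eq_empty_iff_forall_notMem]
      intro y hy
      exact hnoadj x y ((SimpleGraph.mem_neighborFinset _ _ _).mp hy)
    obtain ⟨x, y, hxy⟩ := Fintype.exists_pair_of_one_lt_card (lt_of_lt_of_le one_lt_two hcard)
    exact hxy (heven x y (by rw [hdeg]; exact Even.zero) (by rw [hdeg]; exact Even.zero))
  | cons h1 q =>
    cases q with
    | nil =>
      -- maximum path has length 1 : an isolated edge, swap its ends
      have hNa : ∀ x, H.Adj a x → x = b := by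
        intro x hx
        simpa [Walk.getVert_cons_succ, Walk.getVert_zero] using lemB hac _ hp hmaxp hx
      have hrevp : (Walk.cons h1.symm (Walk.nil : H.Walk a a)).IsPath := by
        rw [Walk.cons_isPath_iff]
        exact ⟨Walk.IsPath.nil, by simp [h1.ne']⟩
      have hmaxrev : ∀ (x y : V) (r : H.Walk x y), r.IsPath →
          r.length ≤ (Walk.cons h1.symm (Walk.nil : H.Walk a a)).length := by
        intro x y r hr
        simpa using hmaxp x y r hr
      have hNb : ∀ x, H.Adj b x → x = a := by
        intro x hx
        simpa [Walk.getVert_cons_succ, Walk.getVert_zero] using lemB hac _ hrevp hmaxrev hx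
      refine lemSwap h1.ne ?_ hinv
      intro x hxa hxb
      exact iff_of_false (fun hx => hxb (hNa x hx)) (fun hx => hxa (hNb x hx))
    | cons h2 r =>
      rename_i v1 v2
      cases r with
      | nil =>
        -- maximum path has length 2 : both endpoints are leaves at v1, swap them
        have hNa : ∀ x, H.Adj a x → x = v1 := by
          intro x hx
          simpa [Walk.getVert_cons_succ, Walk.getVert_zero] using lemB hac _ hp hmaxp hx
        have hsup := hp.support_nodup
        simp only [Walk.support_cons, Walk.support_nil, List.nodup_cons, List.mem_cons,
          List.mem_singleton, List.not_mem_nil] at hsup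
        have hab : a ≠ b := fun hh => hsup.1 (Or.inr (Or.inl hh))
        have hb1 : b ≠ v1 := h2.ne'
        have hba : b ≠ a := fun hh => hab hh.symm
        have hrevp : (Walk.cons h2.symm (Walk.cons h1.symm (Walk.nil : H.Walk a a))).IsPath := by
          rw [Walk.cons_isPath_iff, Walk.cons_isPath_iff]
          exact ⟨⟨Walk.IsPath.nil, by simp [h1.ne']⟩, by simp [hb1, hba]⟩
        have hmaxrev : ∀ (x y : V) (s : H.Walk x y), s.IsPath →
            s.length ≤ (Walk.cons h2.symm (Walk.cons h1.symm (Walk.nil : H.Walk a a))).length := by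
          intro x y s hs
          simpa using hmaxp x y s hs
        have hNb : ∀ x, H.Adj b x → x = v1 := by
          intro x hx
          simpa [Walk.getVert_cons_succ, Walk.getVert_zero] using lemB hac _ hrevp hmaxrev hx
        refine lemSwap hab ?_ hinv
        intro x hxa hxb
        constructor
        · intro hx; rw [hNa x hx]; exact h2.symm
        · intro hx; rw [hNb x hx]; exact h1
      | cons h3 r' =>
        -- maximum path has length ≥ 3
        rename_i v3
        set p : H.Walk a b := Walk.cons h1 (Walk.cons h2 (Walk.cons h3 r')) with hpdef
        have hlen3 : 3 ≤ p.length := by simp [hpdef]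
        rcases lemC H hac p hp hmaxp (by omega) with ⟨u, v, huv, hC⟩ | hev1
        · exact lemSwap huv hC hinv
        have hmaxrev : ∀ (x y : V) (s : H.Walk x y), s.IsPath → s.length ≤ p.reverse.length := by
          intro x y s hs
          rw [Walk.length_reverse]
          exact hmaxp x y s hs
        rcases lemC H hac p.reverse hp.reverse hmaxrev
            (by rw [Walk.length_reverse]; omega) with ⟨u, v, huv, hC⟩ | hev2
        · exact lemSwap huv hC hinv
        have hEq := heven _ _ hev1 hev2
        rw [Walk.getVert_reverse] at hEq
        have := getVert_inj_aux p hp 1 (p.length - 1) (by omega) (by omega) hEq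
        omega
end

section
/- Every tree with at least two vertices that has no automorphism of order 2 contains at least two vertices of even degree. -/
/-!
If at most one vertex has even degree, then all non-leaves but one have degree at least 3, and
the degree sum `2 (n - 1)` of a tree on `n` vertices forces more leaves than non-leaves. So
either two leaves are adjacent or two leaves share their neighbour; in both cases transposing
them is an automorphism of order 2.
-/

open Finset

namespace SimpleGraph

variable {V : Type*}

def AreTwins (G : SimpleGraph V) (a b : V) : Prop :=
  ∀ x, x ≠ a → x ≠ b → (G.Adj a x ↔ G.Adj b x)

def swapIso [DecidableEq V] (G : SimpleGraph V) {a b : V} (h : G.AreTwins a b) : G ≃g G where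
  toEquiv := Equiv.swap a b
  map_rel_iff' {x y} := by
    unfold AreTwins at h
    simp only [Equiv.swap_apply_def]
    split_ifs <;> subst_vars <;> grind [G.adj_comm, G.irrefl]

variable [Fintype V] {G : SimpleGraph V} [DecidableRel G.Adj]

lemma IsTree.sum_degrees_add_two (hG : G.IsTree) : ∑ v, G.degree v + 2 = 2 * Fintype.card V := by
  rw [G.sum_degrees_eq_twice_card_edges, ← hG.card_edgeFinset]; ring

lemma IsTree.card_filter_degree_ne_one_lt [Nontrivial V] (hG : G.IsTree)
    (heven : {v | Even (G.degree v)}.Subsingleton) :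
    #{v | G.degree v ≠ 1} < #{v | G.degree v = 1} := by
  have hpos := hG.connected.preconnected.degree_pos_of_nontrivial (G := G)
  have hE : #{v | Even (G.degree v)} ≤ 1 :=
    card_le_one.mpr fun u hu v hv => heven (by simpa using hu) (by simpa using hv)
  have hpoint : ∀ v, 3 ≤ G.degree v + 2 * (if G.degree v = 1 then 1 else 0) +
      (if Even (G.degree v) then 1 else 0) := by
    intro v
    have := hpos v
    split_ifs <;> grind
  have hsum := sum_le_sum (s := univ) fun v _ => hpoint v
  simp only [sum_add_distrib, ← mul_sum, sum_boole, sum_const, card_univ, smul_eq_mul,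
    Nat.cast_id] at hsum
  have hsplit := card_filter_add_card_filter_not (s := univ) (fun v => G.degree v = 1)
  rw [card_univ] at hsplit
  have := hG.sum_degrees_add_two
  simp only [ne_eq]
  omega

lemma card_filter_degree_eq_one_le [DecidableEq V] (hno_twins : ∀ a b, G.AreTwins a b → a = b) :
    #{v | G.degree v = 1} ≤ #{v | G.degree v ≠ 1} := by
  have hleaf : ∀ a ∈ ({v | G.degree v = 1} : Finset V), ∃ c, ∀ x, G.Adj a x ↔ x = c := by
    intro a ha
    obtain ⟨c, hc, huniq⟩ := degree_eq_one_iff_existsUnique_adj.mp (mem_filter.mp ha).2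
    exact ⟨c, fun x => ⟨huniq x, fun hx => hx ▸ hc⟩⟩
  choose! f hf using hleaf
  refine card_le_card_of_injOn f (fun a ha => ?_) (fun a ha b hb hab => ?_)
  · refine mem_filter.mpr ⟨mem_univ _, fun hdeg => ?_⟩
    have hadj : G.Adj a (f a) := (hf a ha (f a)).mpr rfl
    have hfa : f a ∈ ({v | G.degree v = 1} : Finset V) := mem_filter.mpr ⟨mem_univ _, hdeg⟩
    have hffa : f (f a) = a := ((hf (f a) hfa a).mp hadj.symm).symm
    exact G.ne_of_adj hadj <| hno_twins a (f a) fun x hxa hxfa => by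
      rw [hf a ha x, hf (f a) hfa x, hffa]; exact iff_of_false hxfa hxa
  · exact hno_twins a b fun x _ _ => by rw [hf a ha, hf b hb, hab]

end SimpleGraph

/-- Every tree with at least two vertices and no automorphism of order 2 has at
least two vertices of even degree. -/
theorem stmt_5 {V : Type*} [Fintype V] [DecidableEq V] (H : SimpleGraph V)
    [DecidableRel H.Adj]
    (htree : H.IsTree) (hcard : 2 ≤ Fintype.card V)
    (hinv : ∀ ρ : H ≃g H, (∀ v, ρ (ρ v) = v) → ∀ v, ρ v = v) :
    ∃ u v : V, u ≠ v ∧ Even (H.degree u) ∧ Even (H.degree v) := by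
  have : Nontrivial V := Fintype.one_lt_card_iff_nontrivial.mp hcard
  by_contra! hodd
  have heven : {v | Even (H.degree v)}.Subsingleton := fun u hu v hv =>
    by_contra fun huv => hodd u v huv hu hv
  have hno_twins : ∀ a b, H.AreTwins a b → a = b := fun a b h =>
    (hinv (H.swapIso h) (Equiv.swap_apply_self a b) a).symm.trans (Equiv.swap_apply_left a b)
  exact (htree.card_filter_degree_ne_one_lt heven).not_ge
    (SimpleGraph.card_filter_degree_eq_one_le hno_twins)
end

section
/- Let H be a finite simple graph whose shortest odd cycle has length ℓ (the odd-girth of H is ℓ), and let G be a cycle of length ℓ. Then the image of G under any graph homomorphism from G to H is a cycle of length ℓ in H. -/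
/-!
If `σ` identified two distinct vertices of the `ℓ`-cycle, the cycle would split into two closed
walks of `H`, each of positive length, whose lengths add up to the odd number `ℓ`; the odd one is
shorter than `ℓ` and, by a parity-preserving shortcutting of walks, contains an odd cycle
shorter than `ℓ`. Hence `σ` is injective and maps the spanning cycle of `cycleGraph ℓ` onto an
`ℓ`-cycle.
-/

namespace SimpleGraph

variable {V W : Type*} {G : SimpleGraph V} {H : SimpleGraph W}

namespace Walk

theorem exists_isPath_length_modEq_or_exists_odd_isCycle {u v : V} (p : G.Walk u v) :
    (∃ q : G.Walk u v, q.IsPath ∧ q.length ≤ p.length ∧ q.length ≡ p.length [MOD 2]) ∨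
      ∃ (w : V) (c : G.Walk w w), c.IsCycle ∧ Odd c.length ∧ c.length ≤ p.length := by
  classical
  induction p with
  | nil => exact .inl ⟨nil, by simp, le_rfl, rfl⟩
  | @cons u w v h p ih =>
    obtain ⟨q, hq, hqp, hpar⟩ | ⟨x, c, hc, hodd, hle⟩ := ih
    swap
    · exact .inr ⟨x, c, hc, hodd, hle.trans (by simp)⟩
    by_cases hu : u ∈ q.support
    swap
    · exact .inl ⟨cons h q, (cons_isPath_iff h q).mpr ⟨hq, hu⟩, by simpa using hqp,
        by simpa using hpar.add_right 1⟩
    -- `u` reappears on `q`: the prefix `a` closes up a cycle `cons h a`, which is either odd or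
    -- of even length, in which case the suffix `b` is a path of the right parity.
    set a := q.takeUntil u hu
    set b := q.dropUntil u hu
    have hab : a.length + b.length = q.length := by rw [← length_append, take_spec]
    have ha₀ : a.length ≠ 0 := fun h0 ↦ h.ne (eq_of_length_eq_zero h0).symm
    unfold Nat.ModEq at hpar
    rcases Nat.even_or_odd a.length with ⟨r, hr⟩ | ⟨r, hr⟩
    · refine .inr ⟨u, cons h a, ?_, ?_, ?_⟩
      · refine isCycle_iff_isPath_tail_and_le_length.mpr ⟨?_, ?_⟩
        · simpa using hq.takeUntil hu
        · simp only [length_cons]; omega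
      · simp only [length_cons, Nat.odd_iff]; omega
      · simp only [length_cons]; omega
    · refine .inl ⟨b, hq.dropUntil hu, ?_, ?_⟩
      · simp only [length_cons]; omega
      · simp only [Nat.ModEq, length_cons]; omega

theorem exists_odd_isCycle_length_le {u : V} (p : G.Walk u u) (hp : Odd p.length) :
    ∃ (w : V) (c : G.Walk w w), c.IsCycle ∧ Odd c.length ∧ c.length ≤ p.length := by
  refine p.exists_isPath_length_modEq_or_exists_odd_isCycle.resolve_left ?_
  rintro ⟨q, hq, -, hpar⟩
  rw [isPath_iff_nil, ← length_eq_zero_iff] at hq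
  rw [Nat.odd_iff] at hp
  simp [Nat.ModEq, hq, hp] at hpar

theorem exists_length_add_eq_of_mem_support {v a b : V} (c : G.Walk v v) (ha : a ∈ c.support)
    (hb : b ∈ c.support) :
    ∃ (p : G.Walk a b) (q : G.Walk b a), p.length + q.length = c.length := by
  classical
  have hb' : b ∈ (c.rotate a ha).support := (c.mem_support_rotate_iff a ha).mpr hb
  exact ⟨_, _, by rw [← length_append, take_spec _ hb', length_rotate]⟩

end Walk

theorem Hom.injOn_support_of_odd_length (f : G →g H) {v : V} {c : G.Walk v v}
    (hc : Odd c.length)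
    (hmin : ∀ (w : W) (d : H.Walk w w), d.IsCycle → Odd d.length → c.length ≤ d.length) :
    Set.InjOn f {x | x ∈ c.support} := by
  intro a ha b hb hfab
  by_contra hab
  obtain ⟨p, q, hpq⟩ := c.exists_length_add_eq_of_mem_support ha hb
  have hp₀ : p.length ≠ 0 := fun h0 ↦ hab (Walk.eq_of_length_eq_zero h0)
  have hq₀ : q.length ≠ 0 := fun h0 ↦ hab (Walk.eq_of_length_eq_zero h0).symm
  rw [Nat.odd_iff] at hc
  obtain ⟨d, hd, hdc⟩ : ∃ d : H.Walk (f a) (f a), Odd d.length ∧ d.length < c.length := by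
    rcases Nat.even_or_odd p.length with ⟨r, hr⟩ | hp
    · refine ⟨(q.map f).copy hfab.symm rfl, ?_, ?_⟩ <;>
        simp only [Walk.length_copy, Walk.length_map, Nat.odd_iff] <;> omega
    · refine ⟨(p.map f).copy rfl hfab.symm, by simpa using hp, ?_⟩
      simp only [Walk.length_copy, Walk.length_map]
      omega
  obtain ⟨w, e, he, heo, hed⟩ := d.exists_odd_isCycle_length_le hd
  exact (hmin w e he heo).not_gt (hed.trans_lt hdc)

theorem cycleGraph.toSubgraph_adj_cycle (n : ℕ) (v : Fin (n + 3)) :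
    (cycleGraph.cycle n).toSubgraph.Adj (v + 1) v := by
  have hv := v.isLt
  have := (cycleGraph.cycle n).toSubgraph_adj_getVert (i := n + 2 - v) (by rw [length_cycle]; omega)
  rw [cycleGraph.getVert_cycle (by omega), cycleGraph.getVert_cycle (by omega),
    show n + 3 - (n + 2 - v) = v + 1 by omega, show n + 3 - (n + 2 - v + 1) = v by omega] at this
  convert this using 1 <;> ext <;> simp [Fin.val_add, Nat.mod_eq_of_lt hv]

theorem cycleGraph.toSubgraph_cycle (n : ℕ) : (cycleGraph.cycle n).toSubgraph = ⊤ := by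
  refine eq_top_iff.mpr ⟨fun v _ ↦ (toSubgraph_adj_cycle n v).snd_mem, fun u v huv ↦ ?_⟩
  rcases cycleGraph_adj.mp huv with h | h
  · exact sub_eq_iff_eq_add'.mp h ▸ toSubgraph_adj_cycle n v
  · exact (sub_eq_iff_eq_add'.mp h ▸ toSubgraph_adj_cycle n u).symm

theorem cycleGraph.mem_support_cycle (n : ℕ) (v : Fin (n + 3)) :
    v ∈ (cycleGraph.cycle n).support :=
  (Walk.mem_verts_toSubgraph _).mp (toSubgraph_adj_cycle n v).snd_mem

end SimpleGraph

theorem stmt_7_general {V : Type*} (H : SimpleGraph V) {ℓ : ℕ}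
    (hodd : Odd ℓ)
    (hex : ∃ (u : V) (c : H.Walk u u), c.IsCycle ∧ c.length = ℓ)
    (hmin : ∀ (u : V) (c : H.Walk u u), c.IsCycle → Odd c.length → ℓ ≤ c.length)
    (σ : SimpleGraph.cycleGraph ℓ →g H) :
    ∃ (u : V) (c : H.Walk u u), c.IsCycle ∧ c.length = ℓ ∧
      c.toSubgraph = SimpleGraph.Subgraph.map σ ⊤ := by
  obtain ⟨n, rfl⟩ : ∃ n, ℓ = n + 3 := by
    obtain ⟨_, c, hc, rfl⟩ := hex
    exact ⟨_, (Nat.sub_add_cancel hc.three_le_length).symm⟩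
  let C := SimpleGraph.cycleGraph.cycle n
  have hσ : Function.Injective σ := fun a b ↦
    σ.injOn_support_of_odd_length (c := C) (by simpa [C] using hodd) (by simpa [C] using hmin)
      (SimpleGraph.cycleGraph.mem_support_cycle n a) (SimpleGraph.cycleGraph.mem_support_cycle n b)
  refine ⟨σ 0, C.map σ, SimpleGraph.cycleGraph.isCycle_cycle.map hσ, by simp [C], ?_⟩
  rw [SimpleGraph.Walk.toSubgraph_map, SimpleGraph.cycleGraph.toSubgraph_cycle]

/-- If the odd-girth of `H` is `ℓ`, the image of an `ℓ`-cycle under any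
homomorphism to `H` is an `ℓ`-cycle of `H`. -/
theorem stmt_7 {V : Type*} [Fintype V] (H : SimpleGraph V) {ℓ : ℕ}
    (hodd : Odd ℓ)
    (hex : ∃ (u : V) (c : H.Walk u u), c.IsCycle ∧ c.length = ℓ)
    (hmin : ∀ (u : V) (c : H.Walk u u), c.IsCycle → Odd c.length → ℓ ≤ c.length)
    (σ : SimpleGraph.cycleGraph ℓ →g H) :
    ∃ (u : V) (c : H.Walk u u), c.IsCycle ∧ c.length = ℓ ∧
      c.toSubgraph = SimpleGraph.Subgraph.map σ ⊤ :=
  stmt_7_general H hodd hex hmin σ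
end

section
/- Let H be a square-free simple graph and let P = v₀v₁…v_k (k ≥ 1) be a path in H. Let J_P be the caterpillar graph with vertices {y, u₁,…,u_{k−1}, z, w₁,…,w_{k−1}}, where y u₁ … u_{k−1} z is a path and u_j is additionally adjacent to w_j for each j. Then for any vertex a ∈ Γ_H(v₀) \ {v₁} and any homomorphism σ : J_P → H satisfying σ(y) = a and σ(w_j) = v_j for all j ∈ [k−1], it holds that σ(u_j) = v_{j−1} for all j ∈ [k−1]. -/
/-!
Square-freeness means two distinct vertices have at most one common neighbour. By induction
on `j`, `u j` is a common neighbour of `u (j - 1)` (which is `a` or `v (j - 2)`) and of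
`v j`; so is `v (j - 1)`, hence the two coincide.
-/

namespace SimpleGraph

variable {V : Type*} {H : SimpleGraph V}

theorem eq_of_common_neighbours_of_not_exists_square
    (hsf : ¬ ∃ a b c d : V, a ≠ b ∧ a ≠ c ∧ a ≠ d ∧ b ≠ c ∧ b ≠ d ∧ c ≠ d ∧
      H.Adj a b ∧ H.Adj b c ∧ H.Adj c d ∧ H.Adj d a)
    {x y b c : V} (hxy : x ≠ y) (hxb : H.Adj x b) (hyb : H.Adj y b) (hxc : H.Adj x c)
    (hyc : H.Adj y c) : b = c := by
  by_contra hbc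
  exact hsf ⟨x, b, y, c, hxb.ne, hxy, hxc.ne, hyb.ne', hbc, hyc.ne, hxb, hyb.symm, hyc,
    hxc.symm⟩

end SimpleGraph

/-- Here `u` encodes the caterpillar homomorphism `σ`: `u 0 = σ y`, `u j = σ u_j`,
`u k = σ z`, and `hup` records the edges `u_j w_j` with `σ w_j = v j`. -/
theorem stmt_11_general {V : Type*} (H : SimpleGraph V)
    (hsf : ¬ ∃ a b c d : V, a ≠ b ∧ a ≠ c ∧ a ≠ d ∧ b ≠ c ∧ b ≠ d ∧ c ≠ d ∧
      H.Adj a b ∧ H.Adj b c ∧ H.Adj c d ∧ H.Adj d a)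
    {k : ℕ} (v : ℕ → V)
    (hvinj : ∀ i j, i ≤ k → j ≤ k → v i = v j → i = j)
    (hvadj : ∀ j, j < k → H.Adj (v j) (v (j + 1)))
    (a : V) (ha : H.Adj (v 0) a) (hav : a ≠ v 1)
    (u : ℕ → V) (hu0 : u 0 = a)
    (huadj : ∀ j, j < k → H.Adj (u j) (u (j + 1)))
    (hup : ∀ j, 1 ≤ j → j ≤ k - 1 → H.Adj (u j) (v j)) :
    ∀ j, 1 ≤ j → j ≤ k - 1 → u j = v (j - 1) := by
  intro j hj hjk
  induction j, hj using Nat.le_induction with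
  | base =>
    have hau : H.Adj a (u 1) := hu0 ▸ huadj 0 (by omega)
    exact H.eq_of_common_neighbours_of_not_exists_square hsf hav hau (hup 1 le_rfl hjk).symm
      ha.symm (hvadj 0 (by omega)).symm
  | succ n hn ih =>
    have hu : H.Adj (v (n - 1)) (u (n + 1)) := ih (by omega) ▸ huadj n (by omega)
    have hv : H.Adj (v (n - 1)) (v n) := by
      simpa [Nat.sub_add_cancel hn] using hvadj (n - 1) (by omega)
    have hne : v (n - 1) ≠ v (n + 1) := fun h => by
      have := hvinj (n - 1) (n + 1) (by omega) (by omega) h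
      omega
    exact H.eq_of_common_neighbours_of_not_exists_square hsf hne hu
      (hup (n + 1) (by omega) hjk).symm hv (hvadj n (by omega)).symm

/-- Rigidity of caterpillar gadgets: in a square-free graph `H`, for a path
`v 0, …, v k`, any homomorphism of the caterpillar gadget sending `y` to a
neighbour `a ≠ v 1` of `v 0` (here the image of the path `y u₁ … u_{k-1} z` is
encoded by `u`, with `u 0 = a`, and `u j` adjacent to the pinned vertex `v j`)
must send each `u j` to `v (j-1)`. -/
theorem stmt_11 {V : Type*} (H : SimpleGraph V)
    (hsf : ¬ ∃ a b c d : V, a ≠ b ∧ a ≠ c ∧ a ≠ d ∧ b ≠ c ∧ b ≠ d ∧ c ≠ d ∧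
      H.Adj a b ∧ H.Adj b c ∧ H.Adj c d ∧ H.Adj d a)
    {k : ℕ} (hk : 1 ≤ k) (v : ℕ → V)
    (hvinj : ∀ i j, i ≤ k → j ≤ k → v i = v j → i = j)
    (hvadj : ∀ j, j < k → H.Adj (v j) (v (j + 1)))
    (a : V) (ha : H.Adj (v 0) a) (hav : a ≠ v 1)
    (u : ℕ → V) (hu0 : u 0 = a)
    (huadj : ∀ j, j < k → H.Adj (u j) (u (j + 1)))
    (hup : ∀ j, 1 ≤ j → j ≤ k - 1 → H.Adj (u j) (v j)) :
    ∀ j, 1 ≤ j → j ≤ k - 1 → u j = v (j - 1) :=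
  stmt_11_general H hsf v hvinj hvadj a ha hav u hu0 huadj hup
end

section
/- Let H be a square-free simple graph, k ≥ 1, and P = v₀v₁…v_k a path in H such that deg_H(v_j) is odd for all j ∈ {1,…,k−1}. Let J_P be the caterpillar gadget of P (path y u₁ … u_{k−1} z with pendant w_j adjacent to u_j, and w_j required to map to v_j). Then the number of homomorphisms σ : J_P → H with σ(y) = v₁, σ(z) = v_{k−1} and σ(w_j) = v_j for all j, is odd. -/
/-!
Write the images of the spine `y u₁ … u_{k-1} z` as `u 0, …, u k`. A homomorphism either
follows the path, `u j = v (j+1)` for `j < k`, or leaves it for the first time at some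
`1 ≤ m < k`, going to a neighbour `x ≠ v (m+1)` of `v m`. In the latter case the absence of
4-cycles forces `u j = v (j-1)` for all `j > m`: `u (j+1)` and `v j` are both common neighbours
of `u j ≠ v (j+1)` and `v (j+1)`. So there are `1 + ∑_{0<m<k} (deg v m - 1)` homomorphisms,
an odd number.
-/

theorem SimpleGraph.commonNeighbors_subsingleton {V : Type*} {H : SimpleGraph V}
    (hsf : ¬ ∃ a b c d : V, a ≠ b ∧ a ≠ c ∧ a ≠ d ∧ b ≠ c ∧ b ≠ d ∧ c ≠ d ∧
      H.Adj a b ∧ H.Adj b c ∧ H.Adj c d ∧ H.Adj d a)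
    {a b : V} (hab : a ≠ b) : (H.commonNeighbors a b).Subsingleton := by
  rintro c ⟨hac, hbc⟩ d ⟨had, hbd⟩
  by_contra hcd
  exact hsf ⟨a, c, b, d, hac.ne, hab, had.ne, hbc.ne', hcd, hbd.ne,
    hac, hbc.symm, hbd, had.symm⟩

namespace Caterpillar

variable {V : Type*} (H : SimpleGraph V) (v : ℕ → V) (k : ℕ)

/-- Homomorphisms of the caterpillar gadget, given by the images `u 0, …, u k` of the spine
`y u₁ … u_{k-1} z`. -/
def IsHom (u : Fin (k + 1) → V) : Prop :=
  u 0 = v 1 ∧ u (Fin.last k) = v (k - 1) ∧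
    (∀ i : Fin k, H.Adj (u i.castSucc) (u i.succ)) ∧
    (∀ j, ∀ h1 : 1 ≤ j, ∀ h2 : j ≤ k - 1, H.Adj (u ⟨j, by omega⟩) (v j))

/-- `IsHom` with the spine indexed by `ℕ`, so that indices carry no bound proofs. -/
def IsHomSeq (g : ℕ → V) : Prop :=
  g 0 = v 1 ∧ g k = v (k - 1) ∧ (∀ j < k, H.Adj (g j) (g (j + 1))) ∧
    ∀ j, 1 ≤ j → j ≤ k - 1 → H.Adj (g j) (v j)

/-- `σ⁺` is `detour v k (v (k - 1))`; every other homomorphism is a detour at some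
`1 ≤ m < k`. -/
def detour (m : ℕ) (x : V) (j : ℕ) : V :=
  if j < m then v (j + 1) else if j = m then x else v (j - 1)

/-- The values at `m` of the homomorphisms that first deviate from `j ↦ v (j + 1)` at `m`,
where deviating at `k` means being `σ⁺`. -/
def detourVals [Fintype V] [DecidableEq V] [DecidableRel H.Adj] (m : ℕ) : Finset V :=
  if m < k then (H.neighborFinset (v m)).erase (v (m + 1)) else {v (k - 1)}

variable {H v k}

theorem detour_of_lt {m j : ℕ} (x : V) (h : j < m) : detour v m x j = v (j + 1) := if_pos h

@[simp]
theorem detour_self (m : ℕ) (x : V) : detour v m x m = x := by simp [detour]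

theorem detour_of_gt {m j : ℕ} (x : V) (h : m < j) : detour v m x j = v (j - 1) := by
  simp [detour, h.ne', h.not_gt]

theorem IsHom.isHomSeq {u : Fin (k + 1) → V} (hu : IsHom H v k u) :
    IsHomSeq H v k (fun n => u (Fin.ofNat (k + 1) n)) := by
  obtain ⟨h0, hlast, hadj, hpend⟩ := hu
  refine ⟨h0, ?_, fun j hj => ?_, fun j h1 h2 => ?_⟩
  · convert hlast using 2
    ext
    simp
  · convert hadj ⟨j, hj⟩ using 2 <;> ext <;> simp [Nat.mod_eq_of_lt, hj, hj.le]
  · convert hpend j h1 h2 using 2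
    ext
    exact Nat.mod_eq_of_lt (by omega)

theorem IsHomSeq.isHom {g : ℕ → V} (hg : IsHomSeq H v k g) : IsHom H v k (fun j => g j) :=
  ⟨hg.1, hg.2.1, fun i => hg.2.2.1 i i.2, hg.2.2.2⟩

theorem isHomSeq_detour (hvadj : ∀ j, j < k → H.Adj (v j) (v (j + 1))) {m : ℕ} {x : V}
    (hm1 : 1 ≤ m) (hmk : m ≤ k) (hx : H.Adj (v m) x) (hxk : m = k → x = v (k - 1)) :
    IsHomSeq H v k (detour v m x) := by
  have hvadj_pred : ∀ j, 1 ≤ j → j ≤ k → H.Adj (v (j - 1)) (v j) := fun j h1 h2 => by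
    simpa [Nat.sub_add_cancel h1] using hvadj (j - 1) (by omega)
  refine ⟨detour_of_lt x hm1, ?_, fun j hj => ?_, fun j hj1 hjk => ?_⟩
  · rcases hmk.lt_or_eq with h | rfl
    · exact detour_of_gt x h
    · simpa using hxk rfl
  · rcases lt_trichotomy (j + 1) m with h | h | h
    · rw [detour_of_lt x (by omega), detour_of_lt x h]
      exact hvadj _ (by omega)
    · subst h
      rw [detour_of_lt x (by omega), detour_self]
      exact hx
    · rcases (by omega : j = m ∨ m < j) with rfl | h'
      · rw [detour_self, detour_of_gt x h, Nat.add_sub_cancel]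
        exact hx.symm
      · rw [detour_of_gt x h', detour_of_gt x h, Nat.add_sub_cancel]
        exact hvadj_pred j (by omega) (by omega)
  · rcases lt_trichotomy j m with h | rfl | h
    · rw [detour_of_lt x h]
      exact (hvadj j (by omega)).symm
    · rw [detour_self]
      exact hx.symm
    · rw [detour_of_gt x h]
      exact hvadj_pred j hj1 (by omega)

theorem IsHomSeq.eq_of_ne
    (hcn : ∀ a b : V, a ≠ b → (H.commonNeighbors a b).Subsingleton)
    (hvadj : ∀ j, j < k → H.Adj (v j) (v (j + 1))) {g : ℕ → V} (hg : IsHomSeq H v k g)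
    {j : ℕ} (hj1 : 1 ≤ j) (hjk : j < k) (hne : g j ≠ v (j + 1)) : g (j + 1) = v j := by
  obtain ⟨-, hlast, hadj, hpend⟩ := hg
  rcases (by omega : j + 1 = k ∨ j + 1 < k) with h | h
  · rw [h, hlast]
    congr 1
    omega
  · exact hcn _ _ hne ⟨hadj j hjk, (hpend (j + 1) (by omega) (by omega)).symm⟩
      ⟨hpend j hj1 (by omega), (hvadj j hjk).symm⟩

section Counting

variable [Fintype V] [DecidableEq V] [DecidableRel H.Adj]

theorem mem_detourVals_of_lt {m : ℕ} {x : V} (hm : m < k) :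
    x ∈ detourVals H v k m ↔ H.Adj (v m) x ∧ x ≠ v (m + 1) := by
  simp [detourVals, hm, and_comm]

theorem mem_detourVals_self {x : V} : x ∈ detourVals H v k k ↔ x = v (k - 1) := by
  simp [detourVals]

theorem adj_of_mem_detourVals (hvadj : ∀ j, j < k → H.Adj (v j) (v (j + 1))) (hk : 1 ≤ k)
    {m : ℕ} {x : V} (hmk : m ≤ k) (hx : x ∈ detourVals H v k m) : H.Adj (v m) x := by
  rcases hmk.lt_or_eq with h | rfl
  · exact ((mem_detourVals_of_lt h).1 hx).1
  · rw [mem_detourVals_self.1 hx]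
    simpa [Nat.sub_add_cancel hk] using (hvadj (m - 1) (by omega)).symm

theorem card_detourVals_of_lt (hvadj : ∀ j, j < k → H.Adj (v j) (v (j + 1))) {m : ℕ}
    (hm : m < k) : (detourVals H v k m).card = H.degree (v m) - 1 := by
  rw [detourVals, if_pos hm, Finset.card_erase_of_mem (by simpa using hvadj m hm),
    SimpleGraph.card_neighborFinset_eq_degree]

theorem card_detourVals_self : (detourVals H v k k).card = 1 := by
  simp [detourVals]

/-- `m` is the first deviation from `j ↦ v (j + 1)`, or `k` if there is none. -/
theorem IsHomSeq.exists_eq_detour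
    (hcn : ∀ a b : V, a ≠ b → (H.commonNeighbors a b).Subsingleton)
    (hvinj : ∀ i j, i ≤ k → j ≤ k → v i = v j → i = j)
    (hvadj : ∀ j, j < k → H.Adj (v j) (v (j + 1))) (hk : 1 ≤ k) {g : ℕ → V}
    (hg : IsHomSeq H v k g) :
    ∃ m ∈ Finset.Icc 1 k, g m ∈ detourVals H v k m ∧ ∀ j ≤ k, g j = detour v m (g m) j := by
  have hex : ∃ m, k ≤ m ∨ g m ≠ v (m + 1) := ⟨k, .inl le_rfl⟩
  set m := Nat.find hex
  have hmk : m ≤ k := Nat.find_min' hex (.inl le_rfl)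
  have hpre : ∀ j < m, g j = v (j + 1) := fun j hj => by
    simpa using (not_or.1 (Nat.find_min hex hj)).2
  have hdev : m < k → g m ≠ v (m + 1) := fun h => (Nat.find_spec hex).resolve_left (by omega)
  have hm1 : 1 ≤ m := Nat.pos_of_ne_zero fun hm0 => hdev (by omega) (hm0 ▸ hg.1)
  have hpost : ∀ j, m < j → j ≤ k → g j = v (j - 1) := by
    intro j hj
    induction j, hj using Nat.le_induction with
    | base => exact fun h => hg.eq_of_ne hcn hvadj hm1 (by omega) (hdev (by omega))
    | succ j hj ih =>
      refine fun h => hg.eq_of_ne hcn hvadj (by omega) (by omega) fun heq => ?_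
      have := hvinj (j - 1) (j + 1) (by omega) (by omega) ((ih (by omega)).symm.trans heq)
      omega
  refine ⟨m, Finset.mem_Icc.2 ⟨hm1, hmk⟩, ?_, fun j hj => ?_⟩
  · rcases hmk.lt_or_eq with h | h
    · exact (mem_detourVals_of_lt h).2 ⟨(hg.2.2.2 m hm1 (by omega)).symm, hdev h⟩
    · rw [h, mem_detourVals_self]
      exact hg.2.1
  · rcases lt_trichotomy j m with h | rfl | h
    · rw [detour_of_lt _ h, hpre j h]
    · rw [detour_self]
    · rw [detour_of_gt _ h, hpost j h hj]

theorem eq_of_detour_eq {m m' : ℕ} {x x' : V} (hm : m ≤ k) (hm' : m' ≤ k)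
    (hx : x ∈ detourVals H v k m) (hx' : x' ∈ detourVals H v k m')
    (h : ∀ j ≤ k, detour v m x j = detour v m' x' j) : m = m' ∧ x = x' := by
  have hlt : ∀ {m m' : ℕ} {x x' : V}, m < m' → m' ≤ k → x ∈ detourVals H v k m →
      detour v m x m ≠ detour v m' x' m := fun hmm' hm' hx => by
    rw [detour_self, detour_of_lt _ hmm']
    exact ((mem_detourVals_of_lt (hmm'.trans_le hm')).1 hx).2
  obtain rfl : m = m' := by
    by_contra hne
    rcases Nat.lt_or_gt_of_ne hne with hmm' | hmm'
    · exact hlt hmm' hm' hx (h m hm)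
    · exact hlt hmm' hm hx' (h m' hm').symm
  exact ⟨rfl, by simpa using h m hm⟩

theorem card_isHom_eq_sum
    (hcn : ∀ a b : V, a ≠ b → (H.commonNeighbors a b).Subsingleton)
    (hvinj : ∀ i j, i ≤ k → j ≤ k → v i = v j → i = j)
    (hvadj : ∀ j, j < k → H.Adj (v j) (v (j + 1))) (hk : 1 ≤ k) :
    Nat.card {u // IsHom H v k u} = ∑ m ∈ Finset.Icc 1 k, (detourVals H v k m).card := by
  classical
  have himage : Finset.univ.filter (IsHom H v k) =
      ((Finset.Icc 1 k).sigma (detourVals H v k)).image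
        fun p (j : Fin (k + 1)) => detour v p.1 p.2 j := by
    ext u
    simp only [Finset.mem_filter, Finset.mem_univ, true_and, Finset.mem_image, Finset.mem_sigma]
    constructor
    · intro hu
      obtain ⟨m, hm, hx, hu_eq⟩ := hu.isHomSeq.exists_eq_detour hcn hvinj hvadj hk
      exact ⟨⟨m, _⟩, ⟨hm, hx⟩, funext fun j => by simpa using (hu_eq j j.is_le).symm⟩
    · rintro ⟨⟨m, x⟩, ⟨hm, hx⟩, rfl⟩
      rw [Finset.mem_Icc] at hm
      refine (isHomSeq_detour hvadj hm.1 hm.2 ?_ ?_).isHom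
      · exact adj_of_mem_detourVals hvadj hk hm.2 hx
      · rintro rfl
        exact mem_detourVals_self.1 hx
  rw [Nat.card_eq_fintype_card, Fintype.card_subtype, himage, ← Finset.card_sigma]
  refine Finset.card_image_of_injOn fun p hp q hq hpq => ?_
  simp only [Finset.coe_sigma, Set.mem_sigma_iff, Finset.coe_Icc, Set.mem_Icc,
    Finset.mem_coe] at hp hq
  obtain ⟨hm, hx⟩ := eq_of_detour_eq hp.1.2 hq.1.2 hp.2 hq.2
    fun j hj => congrFun hpq ⟨j, Nat.lt_succ_of_le hj⟩
  exact Sigma.ext hm (heq_of_eq hx)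

theorem odd_sum_card_detourVals (hvadj : ∀ j, j < k → H.Adj (v j) (v (j + 1))) (hk : 1 ≤ k)
    (hdeg : ∀ j, 1 ≤ j → j ≤ k - 1 → Odd (H.degree (v j))) :
    Odd (∑ m ∈ Finset.Icc 1 k, (detourVals H v k m).card) := by
  rw [← Finset.Ico_insert_right hk, Finset.sum_insert (by simp), card_detourVals_self]
  refine Even.one_add (Finset.even_sum _ fun m hm => ?_)
  rw [Finset.mem_Ico] at hm
  rw [card_detourVals_of_lt hvadj hm.2]
  exact Nat.Odd.sub_odd (hdeg m hm.1 (by omega)) odd_one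

end Counting

end Caterpillar

/-- In a square-free graph `H`, for a path `v 0, …, v k` whose interior vertices
have odd degree, the number of homomorphisms of the caterpillar gadget with
`y ↦ v 1`, `z ↦ v (k-1)` and `w j ↦ v j` is odd.  Such a homomorphism is
encoded by the images `u : Fin (k+1) → V` of the path `y u₁ … u_{k-1} z`. -/
theorem stmt_12 {V : Type*} [Fintype V] [DecidableEq V] (H : SimpleGraph V)
    [DecidableRel H.Adj]
    (hsf : ¬ ∃ a b c d : V, a ≠ b ∧ a ≠ c ∧ a ≠ d ∧ b ≠ c ∧ b ≠ d ∧ c ≠ d ∧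
      H.Adj a b ∧ H.Adj b c ∧ H.Adj c d ∧ H.Adj d a)
    {k : ℕ} (hk : 1 ≤ k) (v : ℕ → V)
    (hvinj : ∀ i j, i ≤ k → j ≤ k → v i = v j → i = j)
    (hvadj : ∀ j, j < k → H.Adj (v j) (v (j + 1)))
    (hdeg : ∀ j, 1 ≤ j → j ≤ k - 1 → Odd (H.degree (v j))) :
    Odd (Nat.card {u : Fin (k + 1) → V //
      u 0 = v 1 ∧ u (Fin.last k) = v (k - 1) ∧
      (∀ i : Fin k, H.Adj (u i.castSucc) (u i.succ)) ∧
      (∀ j, ∀ h1 : 1 ≤ j, ∀ h2 : j ≤ k - 1, H.Adj (u ⟨j, by omega⟩) (v j))}) := by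
  have hcn : ∀ a b : V, a ≠ b → (H.commonNeighbors a b).Subsingleton :=
    fun _ _ => SimpleGraph.commonNeighbors_subsingleton hsf
  show Odd (Nat.card {u // Caterpillar.IsHom H v k u})
  rw [Caterpillar.card_isHom_eq_sum hcn hvinj hvadj hk]
  exact Caterpillar.odd_sum_card_detourVals hvadj hk hdeg
end

section
/- Let H be a square-free simple graph, k ≥ 1, and P = v₀…v_k a path in H. With J_P the caterpillar gadget of P, for any o ∈ Γ_H(v₀) \ {v₁} and x ∈ Γ_H(v_k) \ {v_{k−1}}, there is no homomorphism σ : J_P → H with σ(y) = o, σ(z) = x, and σ(w_j) = v_j for all j ∈ [k−1]. -/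
/-!
Two distinct vertices of a square-free graph have at most one common neighbour. Prepend `o` to
the path to get the walk `o v₀ v₁ … v_k`, which never returns to a vertex two steps later. Write
`y = u₀` and `z = u_k`. If `σ(u_j)` is its `j`-th vertex, then `σ(u_{j+1})` and the `(j+1)`-st vertex are common neighbours
of the `j`-th and `(j+2)`-nd vertices (the latter is adjacent to `σ(u_{j+1})` through the pendant
`w_{j+1}`, or, for `j + 1 = k`, because `x ∼ v_k`), so they coincide. Hence `σ(z) = v_{k-1}`,
contradicting `x ≠ v_{k-1}`.
-/

namespace SimpleGraph

variable {V : Type*} {H : SimpleGraph V}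

def SquareFree (H : SimpleGraph V) : Prop :=
  ¬ ∃ a b c d : V, a ≠ b ∧ a ≠ c ∧ a ≠ d ∧ b ≠ c ∧ b ≠ d ∧ c ≠ d ∧
    H.Adj a b ∧ H.Adj b c ∧ H.Adj c d ∧ H.Adj d a

theorem SquareFree.eq_of_adj_of_adj (hsf : H.SquareFree) {a b c d : V} (hac : a ≠ c)
    (hab : H.Adj a b) (hbc : H.Adj b c) (hcd : H.Adj c d) (hda : H.Adj d a) : b = d := by
  by_contra hbd
  exact hsf ⟨a, b, c, d, hab.ne, hac, hda.ne', hbc.ne, hbd, hcd.ne, hab, hbc, hcd, hda⟩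

theorem SquareFree.eq_of_adj_two_ahead (hsf : H.SquareFree) {n : ℕ} {u w : ℕ → V}
    (hw : ∀ j ≤ n, H.Adj (w j) (w (j + 1))) (hw₂ : ∀ j < n, w j ≠ w (j + 2))
    (hu₀ : u 0 = w 0) (hu : ∀ j < n, H.Adj (u j) (u (j + 1)))
    (huw : ∀ j < n, H.Adj (u (j + 1)) (w (j + 2))) :
    ∀ j ≤ n, u j = w j := by
  intro j hj
  induction j with
  | zero => exact hu₀
  | succ j ih =>
    have hwu : H.Adj (w j) (u (j + 1)) := ih (by omega) ▸ hu j (by omega)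
    exact hsf.eq_of_adj_of_adj (hw₂ j (by omega)) hwu (huw j (by omega))
      (hw (j + 1) (by omega)).symm (hw j (by omega)).symm

end SimpleGraph

open SimpleGraph

/-- `u j` is the image of the `j`-th spine vertex of the caterpillar (`u 0 = σ y`, `u k = σ z`);
pinning the pendant `w_j` to `v j` becomes `H.Adj (u j) (v j)`. -/
theorem stmt_13 {V : Type*} (H : SimpleGraph V)
    (hsf : ¬ ∃ a b c d : V, a ≠ b ∧ a ≠ c ∧ a ≠ d ∧ b ≠ c ∧ b ≠ d ∧ c ≠ d ∧
      H.Adj a b ∧ H.Adj b c ∧ H.Adj c d ∧ H.Adj d a)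
    {k : ℕ} (hk : 1 ≤ k) (v : ℕ → V)
    (hvinj : ∀ i j, i ≤ k → j ≤ k → v i = v j → i = j)
    (hvadj : ∀ j, j < k → H.Adj (v j) (v (j + 1)))
    (o : V) (ho : H.Adj (v 0) o) (hov : o ≠ v 1)
    (x : V) (hx : H.Adj (v k) x) (hxv : x ≠ v (k - 1)) :
    ¬ ∃ u : ℕ → V, u 0 = o ∧ u k = x ∧
      (∀ j, j < k → H.Adj (u j) (u (j + 1))) ∧
      (∀ j, 1 ≤ j → j ≤ k - 1 → H.Adj (u j) (v j)) := by
  rintro ⟨u, rfl, rfl, hupath, hupin⟩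
  let w : ℕ → V := fun
    | 0 => u 0
    | j + 1 => v j
  have hw : ∀ j ≤ k, H.Adj (w j) (w (j + 1)) := by
    rintro (_ | j) hj
    exacts [ho.symm, hvadj j (by omega)]
  have hw₂ : ∀ j < k, w j ≠ w (j + 2) := by
    rintro (_ | j) hj
    exacts [hov, fun h => by simpa using hvinj j (j + 2) (by omega) (by omega) h]
  have huw : ∀ j < k, H.Adj (u (j + 1)) (w (j + 2)) := by
    intro j hj
    rcases Nat.lt_or_ge (j + 1) k with hjk | hjk
    · exact hupin (j + 1) (by omega) (by omega)
    · obtain rfl : k = j + 1 := by omega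
      exact hx.symm
  have huk : u k = w k :=
    SquareFree.eq_of_adj_two_ahead (u := u) hsf hw hw₂ rfl hupath huw k le_rfl
  obtain ⟨m, rfl⟩ : ∃ m, k = m + 1 := ⟨k - 1, by omega⟩
  exact hxv huk
end

section
/- Let H be a finite simple graph, let v ∈ V(H), and let r ≥ 0. Suppose every vertex of H at distance at most r−1 from v has odd degree. Let P be a path graph with vertices x₀, x₁, …, x_{r+1}. Then the number of homomorphisms from P to H mapping x₀ to v has opposite parity to the number of distinct paths of length r in H from v to vertices of even degree. -/
open Finset

namespace Stmt14Aux

variable {V : Type*} [Fintype V] [DecidableEq V] (H : SimpleGraph V)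
  [DecidableRel H.Adj] (v : V)

lemma odd_cast_iff (m : ℕ) : Odd m ↔ (m : ZMod 2) = 1 := by
  constructor
  · rintro ⟨k, rfl⟩
    push_cast
    rw [show (2 : ZMod 2) = 0 from rfl]
    ring
  · intro h
    rcases Nat.even_or_odd m with he | ho
    · obtain ⟨k, rfl⟩ := he
      rw [show (k + k : ℕ) = 2 * k by ring] at h
      push_cast at h
      rw [show (2 : ZMod 2) = 0 from rfl] at h
      simp at h
    · exact ho

lemma even_cast {m : ℕ} (h : Even m) : (m : ZMod 2) = 0 := by
  obtain ⟨k, rfl⟩ := h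
  rw [show (k + k : ℕ) = 2 * k by ring]
  push_cast
  rw [show (2 : ZMod 2) = 0 from rfl]
  ring

lemma odd_cast {m : ℕ} (h : Odd m) : (m : ZMod 2) = 1 := (odd_cast_iff m).mp h

lemma add_self (a : ZMod 2) : a + a = 0 := by
  rw [← two_mul, show (2 : ZMod 2) = 0 from rfl]; ring

instance instF (u : V) (n : ℕ) : Fintype {w : H.Walk v u // w.length = n} :=
  SimpleGraph.fintypeSetWalkLength H v u n

instance instF2 (u : V) (n : ℕ) : Fintype {w : H.Walk v u // w.IsPath ∧ w.length = n} :=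
  Fintype.subtype ((H.finsetWalkLength n v u).filter (fun w => w.IsPath))
    (by intro w; simp only [Finset.mem_filter, SimpleGraph.mem_finsetWalkLength_iff]; tauto)

instance instF3 (u : V) (n : ℕ) (P : Prop) [Decidable P] :
    Fintype {w : H.Walk v u // w.IsPath ∧ w.length = n ∧ P} :=
  Fintype.subtype ((H.finsetWalkLength n v u).filter (fun w => w.IsPath ∧ P))
    (by intro w; simp only [Finset.mem_filter, SimpleGraph.mem_finsetWalkLength_iff]; tauto)

def sigmaEquiv (Q : ∀ u : V, H.Walk v u → Prop) :
    {p : (u : V) × H.Walk v u // Q p.1 p.2} ≃ (u : V) × {w : H.Walk v u // Q u w} where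
  toFun p := ⟨p.1.1, p.1.2, p.2⟩
  invFun x := ⟨⟨x.1, x.2.1⟩, x.2.2⟩
  left_inv := fun ⟨⟨_, _⟩, _⟩ => rfl
  right_inv := fun ⟨_, _, _⟩ => rfl

lemma card_eq (Q : ∀ u : V, H.Walk v u → Prop) [∀ u, Fintype {w : H.Walk v u // Q u w}] :
    Nat.card {p : (u : V) × H.Walk v u // Q p.1 p.2}
      = ∑ u, Nat.card {w : H.Walk v u // Q u w} := by
  rw [Nat.card_congr (sigmaEquiv H v Q), Nat.card_eq_fintype_card, Fintype.card_sigma]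
  simp [Nat.card_eq_fintype_card]

noncomputable def wcount (n : ℕ) (u : V) : ℕ := Nat.card {w : H.Walk v u // w.length = n}
noncomputable def pcount (n : ℕ) (u : V) : ℕ :=
  Nat.card {w : H.Walk v u // w.IsPath ∧ w.length = n}
noncomputable def A (n : ℕ) : ℕ := Nat.card {p : (u : V) × H.Walk v u // p.2.length = n}
noncomputable def B (n : ℕ) : ℕ :=
  Nat.card {p : (u : V) × H.Walk v u //
    p.2.IsPath ∧ p.2.length = n ∧ Even (H.degree p.1)}

lemma A_eq (n : ℕ) : A H v n = ∑ u, wcount H v n u :=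
  card_eq H v (fun _ w => w.length = n)

lemma B_eq (n : ℕ) : B H v n
    = ∑ u, Nat.card {w : H.Walk v u // w.IsPath ∧ w.length = n ∧ Even (H.degree u)} :=
  card_eq H v (fun u w => w.IsPath ∧ w.length = n ∧ Even (H.degree u))

lemma wcZ (n : ℕ) (u : V) :
    ((wcount H v n u : ℕ) : ZMod 2) = (H.adjMatrix (ZMod 2) ^ n) v u := by
  rw [SimpleGraph.adjMatrix_pow_apply_eq_card_walk, wcount, Nat.card_eq_fintype_card]
  exact congrArg _ (Fintype.card_congr (Equiv.refl _))

lemma rowsum (x : V) :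
    ∑ u, H.adjMatrix (ZMod 2) x u = (H.degree x : ZMod 2) := by
  simp [SimpleGraph.adjMatrix_apply, Finset.sum_boole, SimpleGraph.degree,
    SimpleGraph.neighborFinset_eq_filter]

lemma B_cast (n : ℕ) :
    ((B H v n : ℕ) : ZMod 2)
      = ∑ x ∈ univ.filter (fun x => Even (H.degree x)), ((pcount H v n x : ℕ) : ZMod 2) := by
  rw [B_eq]
  push_cast
  rw [Finset.sum_filter]
  apply Finset.sum_congr rfl
  intro x _
  by_cases hx : Even (H.degree x)
  · rw [if_pos hx]
    exact congrArg (fun m : ℕ => (m : ZMod 2))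
      (Nat.card_congr (Equiv.subtypeEquivRight (fun w => by tauto)))
  · rw [if_neg hx]
    have : IsEmpty {w : H.Walk v x // w.IsPath ∧ w.length = n ∧ Even (H.degree x)} :=
      ⟨fun ⟨_, h⟩ => hx h.2.2⟩
    simp

lemma step (n : ℕ) :
    ((A H v (n + 1) : ℕ) : ZMod 2)
      = ((A H v n : ℕ) : ZMod 2)
        + ∑ x ∈ univ.filter (fun x => Even (H.degree x)), ((wcount H v n x : ℕ) : ZMod 2) := by
  rw [A_eq, A_eq]
  push_cast
  simp only [wcZ]
  have key : ∑ u, (H.adjMatrix (ZMod 2) ^ (n + 1)) v u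
      = ∑ x, (H.adjMatrix (ZMod 2) ^ n) v x * (H.degree x : ZMod 2) := by
    simp only [pow_succ, Matrix.mul_apply]
    rw [Finset.sum_comm]
    exact Finset.sum_congr rfl fun x _ => by rw [← Finset.mul_sum, rowsum]
  rw [key]
  rw [← Finset.sum_filter_add_sum_filter_not univ (fun x => Even (H.degree x))
    (fun x => (H.adjMatrix (ZMod 2) ^ n) v x * (H.degree x : ZMod 2))]
  rw [← Finset.sum_filter_add_sum_filter_not univ (fun x => Even (H.degree x))
    (fun x => (H.adjMatrix (ZMod 2) ^ n) v x)]
  have h1 : ∑ x ∈ univ.filter (fun x => Even (H.degree x)),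
      (H.adjMatrix (ZMod 2) ^ n) v x * (H.degree x : ZMod 2) = 0 := by
    apply Finset.sum_eq_zero
    intro x hx
    rw [even_cast (Finset.mem_filter.mp hx).2, mul_zero]
  have h2 : ∑ x ∈ univ.filter (fun x => ¬ Even (H.degree x)),
      (H.adjMatrix (ZMod 2) ^ n) v x * (H.degree x : ZMod 2)
      = ∑ x ∈ univ.filter (fun x => ¬ Even (H.degree x)), (H.adjMatrix (ZMod 2) ^ n) v x := by
    apply Finset.sum_congr rfl
    intro x hx
    rw [odd_cast (Nat.not_even_iff_odd.mp (Finset.mem_filter.mp hx).2), mul_one]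
  rw [h1, h2]
  have h3 := add_self (∑ x ∈ univ.filter (fun x => Even (H.degree x)),
    (H.adjMatrix (ZMod 2) ^ n) v x)
  linear_combination -h3

lemma aux : ∀ r : ℕ, (∀ u, H.Reachable v u → H.dist v u + 1 ≤ r → Odd (H.degree u)) →
    ((A H v (r + 1) + B H v r : ℕ) : ZMod 2) = 1 := by
  intro r
  induction r with
  | zero =>
    intro _
    have hA0 : A H v 0 = 1 := by
      have : Unique {p : (u : V) × H.Walk v u // p.2.length = 0} := by
        refine ⟨⟨⟨⟨v, SimpleGraph.Walk.nil⟩, rfl⟩⟩, ?_⟩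
        rintro ⟨⟨u, w⟩, h⟩
        cases w with
        | nil => rfl
        | cons h' w' => simp at h
      rw [A]
      exact Nat.card_unique
    have hwp : ∀ x, wcount H v 0 x = pcount H v 0 x := by
      intro x
      rw [wcount, pcount]
      apply Nat.card_congr
      apply Equiv.subtypeEquivRight
      intro w
      constructor
      · intro h
        refine ⟨?_, h⟩
        cases w with
        | nil => exact SimpleGraph.Walk.IsPath.nil
        | cons h' w' => simp at h
      · exact fun h => h.2
    push_cast
    rw [step, B_cast, hA0]
    have hs : ∑ x ∈ univ.filter (fun x => Even (H.degree x)), ((wcount H v 0 x : ℕ) : ZMod 2)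
        = ∑ x ∈ univ.filter (fun x => Even (H.degree x)), ((pcount H v 0 x : ℕ) : ZMod 2) :=
      Finset.sum_congr rfl fun x _ => by rw [hwp]
    rw [hs, add_assoc, add_self, add_zero]
    norm_num
  | succ r ih =>
    intro hodd
    have hIH := ih (fun u hr hd => hodd u hr (by omega))
    have hB0 : B H v r = 0 := by
      rw [B]
      have : IsEmpty {p : (u : V) × H.Walk v u //
          p.2.IsPath ∧ p.2.length = r ∧ Even (H.degree p.1)} := by
        refine ⟨fun p => ?_⟩
        obtain ⟨⟨u, w⟩, hp, hl, he⟩ := p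
        have hd : H.dist v u ≤ r := hl ▸ SimpleGraph.dist_le w
        exact (Nat.not_even_iff_odd.mpr (hodd u ⟨w⟩ (by omega))) he
      exact Nat.card_of_isEmpty
    rw [hB0, Nat.add_zero] at hIH
    push_cast at hIH ⊢
    have hwp : ∀ x ∈ univ.filter (fun x => Even (H.degree x)),
        ((wcount H v (r + 1) x : ℕ) : ZMod 2) = ((pcount H v (r + 1) x : ℕ) : ZMod 2) := by
      intro x hx
      have hx' := (Finset.mem_filter.mp hx).2
      rw [wcount, pcount]
      apply congrArg
      apply Nat.card_congr
      apply Equiv.subtypeEquivRight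
      intro w
      constructor
      · intro h
        refine ⟨?_, h⟩
        have hnd : ¬ (H.dist v x + 1 ≤ r + 1) := fun hle =>
          (Nat.not_even_iff_odd.mpr (hodd x ⟨w⟩ hle)) hx'
        have hle : H.dist v x ≤ w.length := SimpleGraph.dist_le w
        exact w.isPath_of_length_eq_dist (by omega)
      · exact fun h => h.2
    rw [step, B_cast, Finset.sum_congr rfl hwp, add_assoc, add_self, add_zero, hIH]

end Stmt14Aux

/-- If every vertex within distance `r-1` of `v` has odd degree, then the number
of walks of length `r+1` starting at `v` (equivalently, homomorphisms from the
path `x₀ … x_{r+1}` sending `x₀` to `v`) has opposite parity to the number of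
paths of length `r` from `v` to vertices of even degree. -/
theorem stmt_14 {V : Type*} [Fintype V] [DecidableEq V] (H : SimpleGraph V)
    [DecidableRel H.Adj] (v : V) (r : ℕ)
    (hodd : ∀ u, H.Reachable v u → H.dist v u + 1 ≤ r → Odd (H.degree u)) :
    Odd (Nat.card {p : (u : V) × H.Walk v u // p.2.length = r + 1} +
      Nat.card {p : (u : V) × H.Walk v u //
        p.2.IsPath ∧ p.2.length = r ∧ Even (H.degree p.1)}) := by
  rw [Stmt14Aux.odd_cast_iff]
  exact Stmt14Aux.aux H v r hodd
end

section
/- Let H be a connected finite simple graph that has no automorphism of order 2 and exactly one vertex v of positive even degree. Let r = min{dist(v,w) : w lies on a cycle of H} (well-defined since H contains a cycle). Then there is a unique path in H from v to each vertex at distance at most r from v; in particular, for any w with dist(v,w) = r there is exactly one path of length r from v to w. -/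
/-!
A vertex at distance less than `r` from `v` lies on no cycle, so every edge at it is a bridge.
Along a shortest path from `v` to a vertex `w` with `dist v w ≤ r`, every vertex except `w` is
at distance less than `r` from `v`, so every edge of that path is a bridge; and a path all of
whose edges are bridges is the only path between its endpoints.
-/

namespace SimpleGraph

variable {V : Type*} {G : SimpleGraph V}

theorem isBridge_of_not_exists_isCycle {x y : V} (hx : ¬ ∃ c : G.Walk x x, c.IsCycle)
    (h : G.Adj x y) : G.IsBridge s(x, y) := by
  classical
  refine (isBridge_iff_forall_cycle_notMem h).mpr fun _ c hc he ↦ ?_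
  have hxc : x ∈ c.support := c.fst_mem_support_of_mem_edges he
  exact hx ⟨c.rotate x hxc, hc.rotate hxc⟩

namespace Walk

theorem dist_lt_length_of_mem_support {u w x : V} (p : G.Walk u w) (hx : x ∈ p.support)
    (hxw : x ≠ w) : G.dist u x < p.length := by
  classical
  exact (dist_le _).trans_lt (p.length_takeUntil_lt_length hx hxw)

theorem isBridge_of_mem_edges {u w : V} (p : G.Walk u w)
    (hp : ∀ x ∈ p.support, x ≠ w → ¬ ∃ c : G.Walk x x, c.IsCycle) {e : Sym2 V}
    (he : e ∈ p.edges) : G.IsBridge e := by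
  induction e using Sym2.ind with
  | h x y =>
    have hxy : G.Adj x y := p.adj_of_mem_edges he
    by_cases hxw : x = w
    · have hyw : y ≠ w := hxw ▸ hxy.ne.symm
      rw [Sym2.eq_swap]
      exact isBridge_of_not_exists_isCycle (hp y (p.snd_mem_support_of_mem_edges he) hyw) hxy.symm
    · exact isBridge_of_not_exists_isCycle (hp x (p.fst_mem_support_of_mem_edges he) hxw) hxy

theorem IsPath.eq_of_forall_isBridge {u w : V} {p q : G.Walk u w} (hp : p.IsPath)
    (hq : q.IsPath) (hb : ∀ e ∈ p.edges, G.IsBridge e) : p = q := by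
  induction p with
  | nil => exact (eq_nil_iff_nil.mpr (isPath_iff_nil.mp hq)).symm
  | @cons u b w h p ih =>
    cases q with
    | nil => simp at hp
    | @cons _ c _ h' q =>
      rw [cons_isPath_iff] at hp hq
      obtain rfl : b = c := by
        -- the walk `u → c ⇝ w ⇝ b` must cross the bridge `s(u, b)`, and only its first edge can
        have hmem := isBridge_iff_forall_walk_mem_edges.mp (hb _ (by simp))
          (cons h' (q.append p.reverse))
        simp only [edges_cons, edges_append, edges_reverse, List.mem_cons, List.mem_append,
          List.mem_reverse] at hmem
        rcases hmem with hbc | hq' | hp'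
        · simpa [h.ne.symm] using hbc
        · exact absurd (q.fst_mem_support_of_mem_edges hq') hq.2
        · exact absurd (p.fst_mem_support_of_mem_edges hp') hp.2
      rw [ih hp.1 hq.1 fun e he ↦ hb e (by simp [he])]

end Walk

end SimpleGraph

open SimpleGraph

theorem stmt_15_general {V : Type*} (H : SimpleGraph V)
    (hconn : H.Connected)
    (v : V)
    (r : ℕ)
    (hr2 : ∀ w, (∃ c : H.Walk w w, c.IsCycle) → r ≤ H.dist v w) :
    (∀ w, H.dist v w ≤ r → ∀ p q : H.Walk v w, p.IsPath → q.IsPath → p = q) ∧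
    (∀ w, H.dist v w = r →
      Nat.card {p : H.Walk v w // p.IsPath ∧ p.length = r} = 1) := by
  have path_unique : ∀ w, H.dist v w ≤ r → ∀ p q : H.Walk v w, p.IsPath → q.IsPath → p = q := by
    intro w hw p q hp hq
    obtain ⟨p₀, hp₀, hl₀⟩ := hconn.exists_path_of_dist v w
    have hb : ∀ e ∈ p₀.edges, H.IsBridge e := fun e ↦ p₀.isBridge_of_mem_edges
      fun x hx hxw hcyc ↦ by
        have hx_near := p₀.dist_lt_length_of_mem_support hx hxw
        have hx_far := hr2 x hcyc
        omega
    exact (hp₀.eq_of_forall_isBridge hp hb).symm.trans (hp₀.eq_of_forall_isBridge hq hb)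
  refine ⟨path_unique, fun w hw ↦ ?_⟩
  obtain ⟨p₀, hp₀, hl₀⟩ := hconn.exists_path_of_dist v w
  refine Nat.card_eq_one_iff_unique.mpr ⟨⟨fun p q ↦ ?_⟩, ⟨p₀, hp₀, hl₀.trans hw⟩⟩
  exact Subtype.ext (path_unique w hw.le p q p.2.1 q.2.1)

/-- Let `H` be connected, involution-free, with exactly one vertex `v` of
positive even degree, and let `r` be the minimum distance from `v` to a vertex
on a cycle.  Then paths from `v` to vertices at distance at most `r` are unique;
in particular each vertex at distance exactly `r` is reached by exactly one path
of length `r`. -/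
theorem stmt_15 {V : Type*} [Fintype V] [DecidableEq V] (H : SimpleGraph V)
    [DecidableRel H.Adj]
    (hconn : H.Connected)
    (hinv : ∀ ρ : H ≃g H, (∀ u, ρ (ρ u) = u) → ∀ u, ρ u = u)
    (v : V) (hv : 0 < H.degree v ∧ Even (H.degree v))
    (huniq : ∀ u, 0 < H.degree u → Even (H.degree u) → u = v)
    (r : ℕ)
    (hr1 : ∃ w, (∃ c : H.Walk w w, c.IsCycle) ∧ H.dist v w = r)
    (hr2 : ∀ w, (∃ c : H.Walk w w, c.IsCycle) → r ≤ H.dist v w) :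
    (∀ w, H.dist v w ≤ r → ∀ p q : H.Walk v w, p.IsPath → q.IsPath → p = q) ∧
    (∀ w, H.dist v w = r →
      Nat.card {p : H.Walk v w // p.IsPath ∧ p.length = r} = 1) :=
  stmt_15_general H hconn v r hr2
end
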